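/- arXiv:2405.07057 — 3 statements merged into one kernel-verified Lean document; each statement's English description precedes it below -/
import Mathlib

section
/- Let X₁, X₂, Z and ε be mutually independent random variables on a probability space, where X₁ is exponentially distributed with mean λ₁ > 0, X₂ is exponentially distributed with mean λ₂ > 0, Z is nonnegative, and ε takes the values 0 and 1 each with probability 1/2. Let ρ, η, u > 0 and 0 < a₁ ≤ 1, and set A(ε) = 1 − ε(1 − a₁), B(ε) = 1 − (1 − ε)(1 − a₁). Then ℙ( A(ε)·ρ·X₂ < u·(B(ε)·ρ·X₁ + η·ρ·Z + 1) ) = 1 − (1/2)·[ ( λ₂/(a₁·u·λ₁ + λ₂) )·exp(−u/(λ₂·ρ))·𝔼[exp(−η·u·Z/λ₂)] + ( a₁·λ₂/(u·λ₁ + a₁·λ₂) )·exp(−u/(a₁·λ₂·ρ))·𝔼[exp(−η·u·Z/(a₁·λ₂))] ]. -/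
/-! Conditioned on `ε`, the event is the complement of `{T ≤ X₂}` with
`T = s + α X₁ + β Z ≥ 0` independent of `X₂ ~ Exp(λ₂)`. Integrating the exponential tail gives
`ℙ(T ≤ X₂) = 𝔼[exp (-T/λ₂)]`, which factorises by the independence of `X₁` and `Z` into
`exp (-s/λ₂) · 𝔼[exp (-α X₁/λ₂)] · 𝔼[exp (-β Z/λ₂)]`, and the Laplace transform of `X₁` is
`𝔼[exp (-a X₁)] = 1 / (1 + a λ₁)`. The two values of `ε` are then averaged. -/

open MeasureTheory ProbabilityTheory Real

/-- A real random variable `X` is exponentially distributed with mean `lam > 0` if its law has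
density `(1/lam) * exp (-x/lam)` on `[0, ∞)` and `0` on `(-∞, 0)`. -/
def HasExpLaw {Ω : Type*} [MeasurableSpace Ω] (P : Measure Ω) (X : Ω → ℝ) (lam : ℝ) : Prop :=
  Measurable X ∧
    P.map X = MeasureTheory.volume.withDensity
      (fun x => ENNReal.ofReal (if 0 ≤ x then (1 / lam) * Real.exp (-x / lam) else 0))

open Set

namespace ProbabilityTheory

instance nullSingletonClass_expMeasure (r : ℝ) : NullSingletonClass (expMeasure r) := by
  unfold expMeasure gammaMeasure; infer_instance

lemma measureReal_Ici_expMeasure {r t : ℝ} (hr : 0 < r) (ht : 0 ≤ t) :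
    (expMeasure r).real (Ici t) = exp (-(r * t)) := by
  have := isProbabilityMeasure_expMeasure hr
  rw [← compl_Iio, probReal_compl_eq_one_sub measurableSet_Iio, measureReal_congr Iio_ae_eq_Iic,
    ← cdf_eq_real, cdf_expMeasure_eq hr, if_pos ht, sub_sub_cancel]

lemma ae_nonneg_expMeasure {r : ℝ} (hr : 0 < r) : ∀ᵐ x ∂expMeasure r, 0 ≤ x := by
  have := isProbabilityMeasure_expMeasure hr
  have h : (expMeasure r).real (Ici 0) = 1 := by
    rw [measureReal_Ici_expMeasure hr le_rfl, mul_zero, neg_zero, exp_zero]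
  exact ae_iff.2 <| prob_compl_eq_zero_iff measurableSet_Ici |>.2 <|
    (ENNReal.toReal_eq_one_iff _).1 h

lemma integral_exp_neg_mul_expMeasure {r a : ℝ} (hr : 0 < r) (ha : -r < a) :
    ∫ x, exp (-(a * x)) ∂expMeasure r = r / (r + a) := by
  have hdens : ∀ x, (exponentialPDF r x).toReal * exp (-(a * x)) =
      (Ici 0).indicator (fun x => r * exp (-(r + a) * x)) x := by
    intro x
    rcases le_or_gt 0 x with hx | hx
    · rw [exponentialPDF_of_nonneg hx, indicator_of_mem (mem_Ici.2 hx),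
        ENNReal.toReal_ofReal (by positivity), mul_assoc, ← exp_add]
      ring_nf
    · rw [exponentialPDF_of_neg hx, indicator_of_notMem (notMem_Ici.2 hx)]
      simp
  have hr' : -(r + a) < 0 := by linarith
  change ∫ x, exp (-(a * x)) ∂(volume.withDensity (exponentialPDF r)) = _
  rw [integral_withDensity_eq_integral_toReal_smul (f := exponentialPDF r)
    (measurable_exponentialPDFReal r).ennreal_ofReal (ae_of_all _ fun _ => ENNReal.ofReal_lt_top)]
  simp_rw [smul_eq_mul]
  rw [integral_congr_ae (ae_of_all _ hdens), integral_indicator measurableSet_Ici,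
    integral_Ici_eq_integral_Ioi, integral_const_mul, integral_exp_mul_Ioi hr', mul_zero, exp_zero]
  field_simp

variable {Ω : Type*} [MeasurableSpace Ω] {P : Measure Ω}

lemma measureReal_le_of_indepFun_expMeasure [IsProbabilityMeasure P] {T X : Ω → ℝ} {r : ℝ}
    (hr : 0 < r) (hT : Measurable T) (hT0 : ∀ᵐ ω ∂P, 0 ≤ T ω) (hX : Measurable X)
    (hXlaw : P.map X = expMeasure r) (hTX : IndepFun T X P) :
    P.real {ω | T ω ≤ X ω} = ∫ ω, exp (-(r * T ω)) ∂P := by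
  have := isProbabilityMeasure_expMeasure hr
  have hlaw : P.map (fun ω => (T ω, X ω)) = (P.map T).prod (expMeasure r) := by
    rw [← hXlaw]
    exact (indepFun_iff_map_prod_eq_prod_map_map hT.aemeasurable hX.aemeasurable).1 hTX
  have hS : MeasurableSet {p : ℝ × ℝ | p.1 ≤ p.2} := measurableSet_le measurable_fst measurable_snd
  have htail : ∀ᵐ ω ∂P, expMeasure r (Ici (T ω)) = ENNReal.ofReal (exp (-(r * T ω))) :=
    hT0.mono fun ω h => by rw [← measureReal_Ici_expMeasure hr h, ofReal_measureReal]
  calc P.real {ω | T ω ≤ X ω}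
      = ((P.map T).prod (expMeasure r)).real {p | p.1 ≤ p.2} := by
        rw [← hlaw, map_measureReal_apply (hT.prodMk hX) hS]; rfl
    _ = (∫⁻ t, expMeasure r (Ici t) ∂P.map T).toReal := by
        rw [measureReal_def, Measure.prod_apply hS]; rfl
    _ = (∫⁻ ω, ENNReal.ofReal (exp (-(r * T ω))) ∂P).toReal := by
        rw [lintegral_map (f := fun t => expMeasure r (Ici t)) (measurable_measure_prodMk_left hS)
          hT, lintegral_congr_ae htail]
    _ = ∫ ω, exp (-(r * T ω)) ∂P :=
        (integral_eq_lintegral_of_nonneg_ae (ae_of_all _ fun _ => (exp_pos _).le)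
          (by fun_prop)).symm

lemma measureReal_affine_le_of_expMeasure [IsProbabilityMeasure P] {X₁ X₂ Z : Ω → ℝ}
    {r₁ r₂ s α β : ℝ} (hr₁ : 0 < r₁) (hr₂ : 0 < r₂) (hs : 0 ≤ s) (hα : 0 ≤ α) (hβ : 0 ≤ β)
    (hX₁ : Measurable X₁) (hX₂ : Measurable X₂) (hZ : Measurable Z)
    (hX₁law : P.map X₁ = expMeasure r₁) (hX₂law : P.map X₂ = expMeasure r₂)
    (hZ0 : ∀ᵐ ω ∂P, 0 ≤ Z ω)
    (hX₁Z_X₂ : IndepFun (fun ω => (X₁ ω, Z ω)) X₂ P) (hX₁Z : IndepFun X₁ Z P) :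
    P.real {ω | s + α * X₁ ω + β * Z ω ≤ X₂ ω}
      = exp (-(r₂ * s)) * (r₁ / (r₁ + r₂ * α)) * ∫ ω, exp (-(r₂ * β * Z ω)) ∂P := by
  have hX₁0 : ∀ᵐ ω ∂P, 0 ≤ X₁ ω :=
    ae_of_ae_map hX₁.aemeasurable (by rw [hX₁law]; exact ae_nonneg_expMeasure hr₁)
  have hT0 : ∀ᵐ ω ∂P, 0 ≤ s + α * X₁ ω + β * Z ω := by
    filter_upwards [hX₁0, hZ0] with ω h₁ h₂
    positivity
  have hTX₂ : IndepFun (fun ω => s + α * X₁ ω + β * Z ω) X₂ P :=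
    hX₁Z_X₂.comp (φ := fun p : ℝ × ℝ => s + α * p.1 + β * p.2) (ψ := id) (by fun_prop)
      measurable_id
  rw [measureReal_le_of_indepFun_expMeasure hr₂ (by fun_prop) hT0 hX₂ hX₂law hTX₂]
  calc ∫ ω, exp (-(r₂ * (s + α * X₁ ω + β * Z ω))) ∂P
      = ∫ ω, exp (-(r₂ * s)) * (exp (-(r₂ * α * X₁ ω)) * exp (-(r₂ * β * Z ω))) ∂P := by
        congr 1; ext ω
        rw [← exp_add, ← exp_add]; ring_nf
    _ = exp (-(r₂ * s)) *
          ((∫ x, exp (-(r₂ * α * x)) ∂P.map X₁) * ∫ ω, exp (-(r₂ * β * Z ω)) ∂P) := by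
        rw [integral_const_mul, hX₁Z.integral_fun_comp_mul_comp (f := fun x => exp (-(r₂ * α * x)))
          (g := fun z => exp (-(r₂ * β * z))) hX₁.aemeasurable hZ.aemeasurable
          (by fun_prop) (by fun_prop), integral_map hX₁.aemeasurable (by fun_prop)]
    _ = exp (-(r₂ * s)) * (r₁ / (r₁ + r₂ * α)) * ∫ ω, exp (-(r₂ * β * Z ω)) ∂P := by
        rw [hX₁law, integral_exp_neg_mul_expMeasure hr₁ (by nlinarith)]; ring

lemma measureReal_prodMk_mem_eq_avg_of_fair_coin [IsProbabilityMeasure P] {α : Type*}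
    [MeasurableSpace α] {W : Ω → α} {ε : Ω → ℝ} (hW : Measurable W) (hε : Measurable ε)
    (hWε : IndepFun W ε P)
    (hε0 : P {ω | ε ω = 0} = 1 / 2) (hε1 : P {ω | ε ω = 1} = 1 / 2)
    {S : Set (α × ℝ)} (hS : MeasurableSet S) :
    P.real {ω | (W ω, ε ω) ∈ S}
      = (P.real {ω | (W ω, 0) ∈ S} + P.real {ω | (W ω, 1) ∈ S}) / 2 := by
  have hslice : ∀ e : ℝ, P {ω | ε ω = e} = 1 / 2 →
      P.real {ω | (W ω, ε ω) ∈ S ∧ ε ω = e} = P.real {ω | (W ω, e) ∈ S} / 2 := by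
    intro e he
    have hprod := hWε.measure_inter_preimage_eq_mul {w | (w, e) ∈ S} {e}
      (measurable_prodMk_right hS) (measurableSet_singleton e)
    have hset : {ω | (W ω, ε ω) ∈ S ∧ ε ω = e} = W ⁻¹' {w | (w, e) ∈ S} ∩ ε ⁻¹' {e} := by
      ext ω
      simp only [mem_ofPred_eq, mem_inter_iff, mem_preimage, mem_singleton_iff]
      exact ⟨fun ⟨h, he⟩ => ⟨he ▸ h, he⟩, fun ⟨h, he⟩ => ⟨he ▸ h, he⟩⟩
    rw [measureReal_def, hset, hprod]
    change (P {ω | (W ω, e) ∈ S} * P {ω | ε ω = e}).toReal = _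
    rw [he, ENNReal.toReal_mul, measureReal_def]
    norm_num [div_eq_mul_inv]
  have hdisj : Disjoint {ω | ε ω = 0} {ω | ε ω = 1} :=
    disjoint_left.2 fun ω h₀ h₁ => zero_ne_one (h₀.symm.trans h₁)
  have hcover : ∀ᵐ ω ∂P, ε ω = 0 ∨ ε ω = 1 := by
    have hfull : P ({ω | ε ω = 0} ∪ {ω | ε ω = 1}) = 1 := by
      rw [measure_union hdisj (hε (measurableSet_singleton 1)), hε0, hε1, ENNReal.add_halves]
    exact ae_iff.2 ((prob_compl_eq_zero_iff ((hε (measurableSet_singleton 0)).union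
      (hε (measurableSet_singleton 1)))).2 hfull)
  calc P.real {ω | (W ω, ε ω) ∈ S}
      = P.real ({ω | (W ω, ε ω) ∈ S ∧ ε ω = 0} ∪ {ω | (W ω, ε ω) ∈ S ∧ ε ω = 1}) := by
        refine measureReal_congr (hcover.mono fun ω h => ?_)
        exact propext ⟨fun hS => h.imp (fun h₀ => ⟨hS, h₀⟩) (fun h₁ => ⟨hS, h₁⟩),
          fun h' => h'.elim And.left And.left⟩
    _ = (P.real {ω | (W ω, 0) ∈ S} + P.real {ω | (W ω, 1) ∈ S}) / 2 := by
        rw [measureReal_union (hdisj.mono (fun _ h => h.2) (fun _ h => h.2))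
          (show MeasurableSet {ω | (W ω, ε ω) ∈ S ∧ ε ω = 1} from
            (hW.prodMk hε hS).inter (hε (measurableSet_singleton 1))), hslice 0 hε0, hslice 1 hε1]
        ring

lemma iIndepFun.indepFun_prodMk₃ {ι β : Type*} [DecidableEq ι] [MeasurableSpace β]
    {f : ι → Ω → β} (h : iIndepFun f P) (hf : ∀ i, Measurable (f i)) {i j k l : ι}
    (hil : i ≠ l) (hjl : j ≠ l) (hkl : k ≠ l) :
    IndepFun (fun ω => (f i ω, f j ω, f k ω)) (f l) P := by
  have hijk_l := h.indepFun_finset {i, j, k} {l} (by simp [hil.symm, hjl.symm, hkl.symm]) hf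
  exact hijk_l.comp
    (φ := fun v : ({i, j, k} : Finset ι) → β =>
      (v ⟨i, by simp⟩, v ⟨j, by simp⟩, v ⟨k, by simp⟩))
    (ψ := fun v : ({l} : Finset ι) → β => v ⟨l, by simp⟩) (by fun_prop) (by fun_prop)

end ProbabilityTheory

lemma HasExpLaw.map_eq_expMeasure {Ω : Type*} [MeasurableSpace Ω] {P : Measure Ω}
    {X : Ω → ℝ} {lam : ℝ} (hX : HasExpLaw P X lam) : P.map X = expMeasure lam⁻¹ := by
  rw [hX.2]
  change _ = volume.withDensity (exponentialPDF lam⁻¹)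
  congr 1
  ext x
  simp only [exponentialPDF_eq, one_div, inv_mul_eq_div, neg_div]

/-- The event that the SINR `b ρ X₂ / (c ρ X₁ + η ρ Z + 1)` falls below `u`. -/
lemma measureReal_sinr_lt_of_hasExpLaw {Ω : Type*} [MeasurableSpace Ω] {P : Measure Ω}
    [IsProbabilityMeasure P] {lam₁ lam₂ ρ η u b c : ℝ} (hlam₁ : 0 < lam₁) (hlam₂ : 0 < lam₂)
    (hρ : 0 < ρ) (hη : 0 ≤ η) (hu : 0 ≤ u) (hb : 0 < b) (hc : 0 ≤ c) {X₁ X₂ Z : Ω → ℝ}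
    (hX₁ : HasExpLaw P X₁ lam₁) (hX₂ : HasExpLaw P X₂ lam₂) (hZ : Measurable Z)
    (hZ0 : ∀ ω, 0 ≤ Z ω) (hX₁Z_X₂ : IndepFun (fun ω => (X₁ ω, Z ω)) X₂ P)
    (hX₁Z : IndepFun X₁ Z P) :
    P.real {ω | b * ρ * X₂ ω < u * (c * ρ * X₁ ω + η * ρ * Z ω + 1)}
      = 1 - b * lam₂ / (u * c * lam₁ + b * lam₂) * exp (-u / (b * lam₂ * ρ)) *
          ∫ ω, exp (-(η * u * Z ω) / (b * lam₂)) ∂P := by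
  have hX₁m := hX₁.1
  have hX₂m := hX₂.1
  have hset : {ω | b * ρ * X₂ ω < u * (c * ρ * X₁ ω + η * ρ * Z ω + 1)}
      = {ω | u / (b * ρ) + u * c / b * X₁ ω + u * η / b * Z ω ≤ X₂ ω}ᶜ := by
    ext ω
    have hsum : u / (b * ρ) + u * c / b * X₁ ω + u * η / b * Z ω
        = u * (c * ρ * X₁ ω + η * ρ * Z ω + 1) / (b * ρ) := by
      field_simp; ring
    rw [mem_compl_iff, mem_ofPred_eq, mem_ofPred_eq, not_le, hsum, lt_div_iff₀ (by positivity),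
      mul_comm]
  rw [hset, probReal_compl_eq_one_sub (measurableSet_le (by fun_prop) hX₂m),
    measureReal_affine_le_of_expMeasure (inv_pos.2 hlam₁) (inv_pos.2 hlam₂) (by positivity)
      (by positivity) (by positivity) hX₁m hX₂m hZ hX₁.map_eq_expMeasure hX₂.map_eq_expMeasure
      (ae_of_all _ hZ0) hX₁Z_X₂ hX₁Z]
  have hexp : -(lam₂⁻¹ * (u / (b * ρ))) = -u / (b * lam₂ * ρ) := by field_simp
  have hfrac :
      lam₁⁻¹ / (lam₁⁻¹ + lam₂⁻¹ * (u * c / b)) = b * lam₂ / (u * c * lam₁ + b * lam₂) := by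
    field_simp
    ring
  have hint : ∀ z, -(lam₂⁻¹ * (u * η / b) * z) = -(η * u * z) / (b * lam₂) := by
    intro z; field_simp
  simp only [hexp, hfrac, hint]
  ring

theorem stmt_5_general {Ω : Type*} [MeasurableSpace Ω] (P : Measure Ω) [IsProbabilityMeasure P]
    (lam₁ lam₂ ρ η u a₁ : ℝ) (hlam₁ : 0 < lam₁) (hlam₂ : 0 < lam₂)
    (hρ : 0 < ρ) (hη : 0 < η) (hu : 0 < u) (ha₁ : 0 < a₁)
    (X₁ X₂ Z ε : Ω → ℝ)
    (hX₁ : HasExpLaw P X₁ lam₁) (hX₂ : HasExpLaw P X₂ lam₂)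
    (hZmeas : Measurable Z) (hZnonneg : ∀ ω, 0 ≤ Z ω)
    (hεmeas : Measurable ε)
    (hε0 : P {ω | ε ω = 0} = 1/2) (hε1 : P {ω | ε ω = 1} = 1/2)
    (hindep : iIndepFun ![X₁, X₂, Z, ε] P) :
    (P {ω | (1 - ε ω * (1 - a₁)) * ρ * X₂ ω <
        u * ((1 - (1 - ε ω) * (1 - a₁)) * ρ * X₁ ω + η * ρ * Z ω + 1)}).toReal =
      1 - (1/2) *
        ((lam₂ / (a₁ * u * lam₁ + lam₂)) * Real.exp (-u / (lam₂ * ρ)) *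
            (∫ ω, Real.exp (-(η * u * Z ω) / lam₂) ∂P) +
          (a₁ * lam₂ / (u * lam₁ + a₁ * lam₂)) * Real.exp (-u / (a₁ * lam₂ * ρ)) *
            (∫ ω, Real.exp (-(η * u * Z ω) / (a₁ * lam₂)) ∂P)) := by
  have hX₁m := hX₁.1
  have hX₂m := hX₂.1
  have hmeas : ∀ i, Measurable (![X₁, X₂, Z, ε] i) := by
    intro i; fin_cases i <;> assumption
  have hX₁Z : IndepFun X₁ Z P := by
    simpa using hindep.indepFun (show (0 : Fin 4) ≠ 2 by decide)
  have hX₁Z_X₂ : IndepFun (fun ω => (X₁ ω, Z ω)) X₂ P := by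
    simpa using hindep.indepFun_prodMk hmeas 0 2 1 (by decide) (by decide)
  have hWε : IndepFun (fun ω => (X₁ ω, X₂ ω, Z ω)) ε P := by
    simpa using hindep.indepFun_prodMk₃ hmeas (i := 0) (j := 1) (k := 2) (l := 3)
      (by decide) (by decide) (by decide)
  have hbranch b c (hb : 0 < b) (hc : 0 ≤ c) := measureReal_sinr_lt_of_hasExpLaw hlam₁ hlam₂ hρ
    hη.le hu.le hb hc hX₁ hX₂ hZmeas hZnonneg hX₁Z_X₂ hX₁Z
  rw [← measureReal_def]
  refine (measureReal_prodMk_mem_eq_avg_of_fair_coin (hX₁m.prodMk (hX₂m.prodMk hZmeas)) hεmeas hWε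
    hε0 hε1 (S := {p | (1 - p.2 * (1 - a₁)) * ρ * p.1.2.1 <
      u * ((1 - (1 - p.2) * (1 - a₁)) * ρ * p.1.1 + η * ρ * p.1.2.2 + 1)})
    (measurableSet_lt (by fun_prop) (by fun_prop))).trans ?_
  simp only [mem_ofPred_eq]
  rw [hbranch _ _ (by norm_num) (by norm_num; positivity),
    hbranch _ _ (by norm_num; positivity) (by norm_num)]
  simp only [zero_mul, sub_zero, sub_self, one_mul, sub_sub_cancel, mul_one]
  ring

theorem stmt_5 {Ω : Type*} [MeasurableSpace Ω] (P : Measure Ω) [IsProbabilityMeasure P]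
    (lam₁ lam₂ ρ η u a₁ : ℝ) (hlam₁ : 0 < lam₁) (hlam₂ : 0 < lam₂)
    (hρ : 0 < ρ) (hη : 0 < η) (hu : 0 < u) (ha₁ : 0 < a₁) (ha₁' : a₁ ≤ 1)
    (X₁ X₂ Z ε : Ω → ℝ)
    (hX₁ : HasExpLaw P X₁ lam₁) (hX₂ : HasExpLaw P X₂ lam₂)
    (hZmeas : Measurable Z) (hZnonneg : ∀ ω, 0 ≤ Z ω)
    (hεmeas : Measurable ε)
    (hε0 : P {ω | ε ω = 0} = 1/2) (hε1 : P {ω | ε ω = 1} = 1/2)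
    (hindep : iIndepFun ![X₁, X₂, Z, ε] P) :
    (P {ω | (1 - ε ω * (1 - a₁)) * ρ * X₂ ω <
        u * ((1 - (1 - ε ω) * (1 - a₁)) * ρ * X₁ ω + η * ρ * Z ω + 1)}).toReal =
      1 - (1/2) *
        ((lam₂ / (a₁ * u * lam₁ + lam₂)) * Real.exp (-u / (lam₂ * ρ)) *
            (∫ ω, Real.exp (-(η * u * Z ω) / lam₂) ∂P) +
          (a₁ * lam₂ / (u * lam₁ + a₁ * lam₂)) * Real.exp (-u / (a₁ * lam₂ * ρ)) *
            (∫ ω, Real.exp (-(η * u * Z ω) / (a₁ * lam₂)) ∂P)) :=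
  stmt_5_general P lam₁ lam₂ ρ η u a₁ hlam₁ hlam₂ hρ hη hu ha₁ X₁ X₂ Z ε hX₁ hX₂ hZmeas hZnonneg
    hεmeas hε0 hε1 hindep
end

section
/- Let X₁, X₂ and Z be mutually independent real random variables, where X₁ is exponentially distributed with mean λ₁ > 0, X₂ is exponentially distributed with mean λ₂ > 0, and Z is nonnegative. Let A, B, ρ, η, u₁, u₂, u_t > 0 and set Q₁ᵖ = η·u₂/(A·λ₂) + (1/λ₁ + B·u₂/(A·λ₂))·η·u₁/B. Then ℙ( X₂ > (B·ρ·X₁·u₂ + η·ρ·Z·u₂ + u₂)/(A·ρ) and X₁ > (η·ρ·Z·u₁ + u₁)/(B·ρ) and Z > u_t/(η·ρ) ) = ( A·λ₂/(A·λ₂ + B·u₂·λ₁) ) · exp( −u₂/(A·λ₂·ρ) − (1/λ₁ + B·u₂/(A·λ₂))·u₁/(B·ρ) ) · 𝔼[ 1{Z > u_t/(η·ρ)} · exp(−Q₁ᵖ·Z) ]. -/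
open MeasureTheory ProbabilityTheory Real

open Set

lemma setLIntegral_Ioi_ofReal_mul_exp_neg_mul {k c : ℝ} (hk : 0 < k) (hc : 0 ≤ c) (a : ℝ) :
    ∫⁻ x in Ioi a, ENNReal.ofReal (c * exp (-(k * x))) =
      ENNReal.ofReal (c * exp (-(k * a)) / k) := by
  have h_int : IntegrableOn (fun x => c * exp (-(k * x))) (Ioi a) := by
    have h := (exp_neg_integrableOn_Ioi a hk).const_mul c
    simp only [neg_mul] at h
    exact h
  rw [← ofReal_integral_eq_lintegral_ofReal h_int (ae_of_all _ fun x => by positivity),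
    integral_const_mul, integral_comp_mul_left_Ioi (fun x => exp (-x)) a hk,
    integral_exp_neg_Ioi, smul_eq_mul]
  congr 1
  field_simp

noncomputable def expLaw (lam : ℝ) : Measure ℝ :=
  volume.withDensity fun x => ENNReal.ofReal (if 0 ≤ x then (1 / lam) * exp (-x / lam) else 0)

lemma HasExpLaw.map_eq {Ω : Type*} [MeasurableSpace Ω] {P : Measure Ω} {X : Ω → ℝ} {lam : ℝ}
    (h : HasExpLaw P X lam) : P.map X = expLaw lam :=
  h.2

instance (lam : ℝ) : SFinite (expLaw lam) := by
  unfold expLaw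
  infer_instance

lemma setLIntegral_Ioi_ofReal_mul_exp_neg_mul_expLaw {lam m a : ℝ} (hlam : 0 < lam)
    (hm : 0 < lam⁻¹ + m) (ha : 0 ≤ a) {c : ℝ} (hc : 0 ≤ c) :
    ∫⁻ x in Ioi a, ENNReal.ofReal (c * exp (-(m * x))) ∂expLaw lam =
      ENNReal.ofReal (c * exp (-((lam⁻¹ + m) * a)) / (lam * (lam⁻¹ + m))) := by
  rw [expLaw, setLIntegral_withDensity_eq_setLIntegral_mul _
    (Measurable.ite measurableSet_Ici (by fun_prop) measurable_const).ennreal_ofReal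
    (by fun_prop) measurableSet_Ioi]
  have h_density : ∀ x ∈ Ioi a,
      ENNReal.ofReal (if 0 ≤ x then 1 / lam * exp (-x / lam) else 0) *
        ENNReal.ofReal (c * exp (-(m * x))) =
      ENNReal.ofReal (c / lam * exp (-((lam⁻¹ + m) * x))) := by
    intro x hx
    rw [if_pos (ha.trans hx.le), ← ENNReal.ofReal_mul (by positivity), mul_mul_mul_comm,
      ← exp_add, show -x / lam + -(m * x) = -((lam⁻¹ + m) * x) by ring]
    congr 1
    ring
  simp only [Pi.mul_apply]
  rw [setLIntegral_congr_fun measurableSet_Ioi h_density,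
    setLIntegral_Ioi_ofReal_mul_exp_neg_mul hm (by positivity)]
  congr 1
  field_simp

lemma expLaw_Ioi {lam t : ℝ} (hlam : 0 < lam) (ht : 0 ≤ t) :
    expLaw lam (Ioi t) = ENNReal.ofReal (exp (-t / lam)) := by
  have h := setLIntegral_Ioi_ofReal_mul_exp_neg_mul_expLaw (m := 0) hlam (by simpa) ht zero_le_one
  simp only [zero_mul, neg_zero, exp_zero, mul_one, add_zero, setLIntegral_one,
    ENNReal.ofReal_one] at h
  rw [h]
  congr 1
  field_simp

lemma expLaw_prod_apply {lam₁ lam₂ a α β : ℝ} (hlam₁ : 0 < lam₁) (hlam₂ : 0 < lam₂)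
    (ha : 0 ≤ a) (hα : 0 ≤ α) (hβ : 0 ≤ β) :
    (expLaw lam₁).prod (expLaw lam₂) {q | a < q.1 ∧ α + β * q.1 < q.2} =
      ENNReal.ofReal (lam₂ / (lam₂ + β * lam₁) * exp (-(α / lam₂) - (lam₁⁻¹ + β / lam₂) * a)) := by
  set S : Set (ℝ × ℝ) := {q | a < q.1 ∧ α + β * q.1 < q.2}
  have hS : MeasurableSet S :=
    (measurableSet_lt measurable_const measurable_fst).inter
      (measurableSet_lt (by fun_prop) measurable_snd)
  have h_section : ∀ x, expLaw lam₂ (Prod.mk x ⁻¹' S) =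
      (Ioi a).indicator (fun y => ENNReal.ofReal (exp (-(α / lam₂)) * exp (-(β / lam₂ * y)))) x := by
    intro x
    by_cases hx : a < x
    · have hpre : Prod.mk x ⁻¹' S = Ioi (α + β * x) := by
        ext y
        simp [S, hx]
      have hx0 : 0 ≤ x := ha.trans hx.le
      rw [hpre, expLaw_Ioi hlam₂ (by positivity), indicator_of_mem (mem_Ioi.2 hx), ← exp_add]
      congr 2
      ring
    · have hpre : Prod.mk x ⁻¹' S = ∅ := by
        ext y
        simp [S, hx]
      rw [hpre, measure_empty, indicator_of_notMem (notMem_Ioi.2 (not_lt.1 hx))]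
  rw [Measure.prod_apply hS, lintegral_congr h_section, lintegral_indicator measurableSet_Ioi,
    setLIntegral_Ioi_ofReal_mul_exp_neg_mul_expLaw hlam₁ (by positivity) ha (by positivity)]
  congr 1
  rw [sub_eq_add_neg, exp_add]
  field_simp

lemma ProbabilityTheory.IndepFun.measure_preimage_prodMk {Ω α β : Type*} [MeasurableSpace Ω]
    [MeasurableSpace α] [MeasurableSpace β] {P : Measure Ω} [IsFiniteMeasure P] {W : Ω → α}
    {V : Ω → β} (h : IndepFun W V P) (hW : Measurable W) (hV : Measurable V)
    {S : Set (α × β)} (hS : MeasurableSet S) :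
    P ((fun ω => (W ω, V ω)) ⁻¹' S) = ∫⁻ w, P.map V (Prod.mk w ⁻¹' S) ∂P.map W := by
  rw [← Measure.map_apply (hW.prodMk hV) hS,
    h.map_prod_eq_prod_map_map hW.aemeasurable hV.aemeasurable, Measure.prod_apply hS]

lemma ProbabilityTheory.iIndepFun.measure_preimage_eq_lintegral_prod {Ω β : Type*}
    [MeasurableSpace Ω] [MeasurableSpace β] {P : Measure Ω} [IsFiniteMeasure P]
    {X₁ X₂ Z : Ω → β} (h : iIndepFun ![X₁, X₂, Z] P) (hX₁ : Measurable X₁)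
    (hX₂ : Measurable X₂) (hZ : Measurable Z) {S : Set (β × β × β)} (hS : MeasurableSet S) :
    P ((fun ω => (Z ω, (X₁ ω, X₂ ω))) ⁻¹' S) =
      ∫⁻ z, (P.map X₁).prod (P.map X₂) (Prod.mk z ⁻¹' S) ∂P.map Z := by
  have hmeas : ∀ i, Measurable (![X₁, X₂, Z] i) := fun i => by
    fin_cases i
    exacts [hX₁, hX₂, hZ]
  have hZ_indep : IndepFun Z (fun ω => (X₁ ω, X₂ ω)) P := by
    simpa using (h.indepFun_prodMk hmeas 0 1 2 (by decide) (by decide)).symm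
  have hX_indep : IndepFun X₁ X₂ P := by
    simpa using h.indepFun (i := 0) (j := 1) (by decide)
  rw [hZ_indep.measure_preimage_prodMk hZ (hX₁.prodMk hX₂) hS,
    hX_indep.map_prod_eq_prod_map_map hX₁.aemeasurable hX₂.aemeasurable]

lemma toReal_lintegral_map_ofReal {Ω α : Type*} [MeasurableSpace Ω] [MeasurableSpace α]
    {P : Measure Ω} {Z : Ω → α} (hZ : Measurable Z) {g : α → ℝ} (hg : Measurable g)
    (hg_nonneg : ∀ z, 0 ≤ g z) :
    (∫⁻ z, ENNReal.ofReal (g z) ∂P.map Z).toReal = ∫ ω, g (Z ω) ∂P := by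
  rw [← integral_eq_lintegral_of_nonneg_ae (ae_of_all _ hg_nonneg) hg.aestronglyMeasurable,
    integral_map hZ.aemeasurable hg.aestronglyMeasurable]

-- Coordinates are `(z, x₁, x₂)`, so that conditioning on `Z = z` is taking the section at `z`.
def successRegion (A B ρ η u₁ u₂ uₜ : ℝ) : Set (ℝ × ℝ × ℝ) :=
  {p | uₜ / (η * ρ) < p.1 ∧ (η * ρ * p.1 * u₁ + u₁) / (B * ρ) < p.2.1 ∧
    (B * ρ * p.2.1 * u₂ + η * ρ * p.1 * u₂ + u₂) / (A * ρ) < p.2.2}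

lemma measurableSet_successRegion (A B ρ η u₁ u₂ uₜ : ℝ) :
    MeasurableSet (successRegion A B ρ η u₁ u₂ uₜ) := by
  simp only [successRegion, ofPred_and]
  measurability

lemma expLaw_prod_successRegion_section {lam₁ lam₂ A B ρ η u₁ u₂ uₜ : ℝ} (hlam₁ : 0 < lam₁)
    (hlam₂ : 0 < lam₂) (hA : 0 < A) (hB : 0 < B) (hρ : 0 < ρ) (hη : 0 < η) (hu₁ : 0 < u₁)
    (hu₂ : 0 < u₂) (huₜ : 0 < uₜ) (z : ℝ) :
    (expLaw lam₁).prod (expLaw lam₂) (Prod.mk z ⁻¹' successRegion A B ρ η u₁ u₂ uₜ) =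
      ENNReal.ofReal (A * lam₂ / (A * lam₂ + B * u₂ * lam₁) *
        exp (-u₂ / (A * lam₂ * ρ) - (1 / lam₁ + B * u₂ / (A * lam₂)) * u₁ / (B * ρ)) *
        if z > uₜ / (η * ρ) then
          exp (-(η * u₂ / (A * lam₂) + (1 / lam₁ + B * u₂ / (A * lam₂)) * η * u₁ / B) * z)
        else 0) := by
  by_cases hz : uₜ / (η * ρ) < z
  · have hz0 : 0 < z := (div_pos huₜ (mul_pos hη hρ)).trans hz
    have h_threshold : ∀ x, (B * ρ * x * u₂ + η * ρ * z * u₂ + u₂) / (A * ρ) =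
        (η * ρ * z * u₂ + u₂) / (A * ρ) + B * u₂ / A * x := fun x => by
      field_simp
      ring
    have hpre : Prod.mk z ⁻¹' successRegion A B ρ η u₁ u₂ uₜ =
        {q | (η * ρ * z * u₁ + u₁) / (B * ρ) < q.1 ∧
          (η * ρ * z * u₂ + u₂) / (A * ρ) + B * u₂ / A * q.1 < q.2} := by
      ext q
      simp [successRegion, hz, h_threshold]
    rw [hpre, expLaw_prod_apply hlam₁ hlam₂ (by positivity) (by positivity) (by positivity),
      if_pos hz, mul_assoc _ (exp _), ← exp_add]
    congr 2
    · field_simp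
    · congr 1
      field_simp
      ring
  · have hpre : Prod.mk z ⁻¹' successRegion A B ρ η u₁ u₂ uₜ = ∅ := by
      ext q
      simp [successRegion, hz]
    rw [hpre, measure_empty, if_neg hz, mul_zero, ENNReal.ofReal_zero]

theorem stmt_11_general {Ω : Type*} [MeasurableSpace Ω] (P : Measure Ω) [IsProbabilityMeasure P]
    (lam₁ lam₂ A B ρ η u₁ u₂ uₜ : ℝ)
    (hlam₁ : 0 < lam₁) (hlam₂ : 0 < lam₂) (hA : 0 < A) (hB : 0 < B) (hρ : 0 < ρ)
    (hη : 0 < η) (hu₁ : 0 < u₁) (hu₂ : 0 < u₂) (huₜ : 0 < uₜ)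
    (X₁ X₂ Z : Ω → ℝ)
    (hX₁ : HasExpLaw P X₁ lam₁) (hX₂ : HasExpLaw P X₂ lam₂)
    (hZmeas : Measurable Z)
    (hindep : iIndepFun ![X₁, X₂, Z] P)
    (Q₁p : ℝ)
    (hQ₁p : Q₁p = η * u₂ / (A * lam₂) + (1 / lam₁ + B * u₂ / (A * lam₂)) * η * u₁ / B) :
    (P {ω | X₂ ω > (B * ρ * X₁ ω * u₂ + η * ρ * Z ω * u₂ + u₂) / (A * ρ) ∧
        X₁ ω > (η * ρ * Z ω * u₁ + u₁) / (B * ρ) ∧ Z ω > uₜ / (η * ρ)}).toReal =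
      (A * lam₂ / (A * lam₂ + B * u₂ * lam₁)) *
        Real.exp (-u₂ / (A * lam₂ * ρ) - (1 / lam₁ + B * u₂ / (A * lam₂)) * u₁ / (B * ρ)) *
        ∫ ω, (if Z ω > uₜ / (η * ρ) then Real.exp (-Q₁p * Z ω) else 0) ∂P := by
  subst hQ₁p
  have h_event : {ω | X₂ ω > (B * ρ * X₁ ω * u₂ + η * ρ * Z ω * u₂ + u₂) / (A * ρ) ∧
      X₁ ω > (η * ρ * Z ω * u₁ + u₁) / (B * ρ) ∧ Z ω > uₜ / (η * ρ)} =
      (fun ω => (Z ω, (X₁ ω, X₂ ω))) ⁻¹' successRegion A B ρ η u₁ u₂ uₜ := by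
    ext ω
    simp only [successRegion, mem_ofPred_eq, mem_preimage, gt_iff_lt]
    tauto
  rw [h_event, hindep.measure_preimage_eq_lintegral_prod hX₁.1 hX₂.1 hZmeas
      (measurableSet_successRegion A B ρ η u₁ u₂ uₜ), hX₁.map_eq, hX₂.map_eq,
    lintegral_congr (expLaw_prod_successRegion_section hlam₁ hlam₂ hA hB hρ hη hu₁ hu₂ huₜ),
    toReal_lintegral_map_ofReal hZmeas
      ((Measurable.ite measurableSet_Ioi (by fun_prop) measurable_const).const_mul _)
      (fun z => by split_ifs <;> positivity),
    integral_const_mul]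

theorem stmt_11 {Ω : Type*} [MeasurableSpace Ω] (P : Measure Ω) [IsProbabilityMeasure P]
    (lam₁ lam₂ A B ρ η u₁ u₂ uₜ : ℝ)
    (hlam₁ : 0 < lam₁) (hlam₂ : 0 < lam₂) (hA : 0 < A) (hB : 0 < B) (hρ : 0 < ρ)
    (hη : 0 < η) (hu₁ : 0 < u₁) (hu₂ : 0 < u₂) (huₜ : 0 < uₜ)
    (X₁ X₂ Z : Ω → ℝ)
    (hX₁ : HasExpLaw P X₁ lam₁) (hX₂ : HasExpLaw P X₂ lam₂)
    (hZmeas : Measurable Z) (hZnonneg : ∀ ω, 0 ≤ Z ω)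
    (hindep : iIndepFun ![X₁, X₂, Z] P)
    (Q₁p : ℝ)
    (hQ₁p : Q₁p = η * u₂ / (A * lam₂) + (1 / lam₁ + B * u₂ / (A * lam₂)) * η * u₁ / B) :
    (P {ω | X₂ ω > (B * ρ * X₁ ω * u₂ + η * ρ * Z ω * u₂ + u₂) / (A * ρ) ∧
        X₁ ω > (η * ρ * Z ω * u₁ + u₁) / (B * ρ) ∧ Z ω > uₜ / (η * ρ)}).toReal =
      (A * lam₂ / (A * lam₂ + B * u₂ * lam₁)) *
        Real.exp (-u₂ / (A * lam₂ * ρ) - (1 / lam₁ + B * u₂ / (A * lam₂)) * u₁ / (B * ρ)) *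
        ∫ ω, (if Z ω > uₜ / (η * ρ) then Real.exp (-Q₁p * Z ω) else 0) ∂P :=
  stmt_11_general P lam₁ lam₂ A B ρ η u₁ u₂ uₜ hlam₁ hlam₂ hA hB hρ hη hu₁ hu₂ huₜ X₁ X₂ Z hX₁ hX₂
    hZmeas hindep Q₁p hQ₁p
end

section
/- Let X₁, X₂ and Z be mutually independent real random variables, where X₁ is exponentially distributed with mean λ₁ > 0, X₂ is exponentially distributed with mean λ₂ > 0, and Z is nonnegative. Let A, B, η, u > 0. Then lim_{ρ → ∞} ℙ( A·ρ·X₂ < u·(B·ρ·X₁ + η·ρ·Z + 1) ) = 1 − ( A·λ₂/(A·λ₂ + B·u·λ₁) )·𝔼[ exp( −η·u·Z/(A·λ₂) ) ], and this limit is strictly positive. -/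
open MeasureTheory ProbabilityTheory Real Filter

/-!
Dividing by `Aρ`, the outage event is `{X₂ < Y_ρ}` with
`Y_ρ = (uB/A) X₁ + (uη/A) Z + u/(Aρ) ≥ 0` independent of `X₂`, so its probability is
`1 - 𝔼[exp (-Y_ρ/λ₂)]`. Independence of `X₁` and `Z` and the Laplace transform
`𝔼[exp (-s X₁)] = 1/(1 + sλ₁)` turn this into `1 - exp (-u/(Aρλ₂)) · q · 𝔼[exp (-ηuZ/(Aλ₂))]`
with `q = Aλ₂/(Aλ₂ + Buλ₁) < 1`. The first factor tends to `1` as `ρ → ∞`, and the limit is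
positive because the expectation is at most `1`.
-/

open Set Topology

namespace HasExpLaw

variable {Ω : Type*} [MeasurableSpace Ω] {P : Measure Ω} {X : Ω → ℝ} {lam : ℝ}

lemma map_eq_s17 (hX : HasExpLaw P X lam) :
    P.map X = volume.withDensity (exponentialPDF lam⁻¹) := by
  rw [hX.2]
  congr 1 with x
  rw [exponentialPDF_eq, one_div, neg_div, div_eq_inv_mul x]

lemma map_Iio (hlam : 0 < lam) (hX : HasExpLaw P X lam) (y : ℝ) :
    P.map X (Iio y) = ENNReal.ofReal (1 - exp (-(y / lam))) := by
  rw [hX.map_eq_s17, withDensity_apply _ measurableSet_Iio, setLIntegral_congr Iio_ae_eq_Iic,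
    lintegral_exponentialPDF_eq_antiDeriv (inv_pos.2 hlam), inv_mul_eq_div]
  split_ifs with hy
  · rfl
  · -- both sides vanish: `ENNReal.ofReal` truncates the negative value `1 - exp (-(y / lam))`
    rw [ENNReal.ofReal_zero, eq_comm, ENNReal.ofReal_eq_zero, sub_nonpos, one_le_exp_iff,
      neg_nonneg]
    exact div_nonpos_of_nonpos_of_nonneg (not_le.1 hy).le hlam.le

lemma ae_nonneg (hlam : 0 < lam) (hX : HasExpLaw P X lam) : ∀ᵐ ω ∂P, 0 ≤ X ω := by
  have : P.map X (Iio 0) = 0 := by simp [hX.map_Iio hlam]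
  rw [Measure.map_apply hX.1 measurableSet_Iio] at this
  rw [ae_iff]
  simp only [not_le]
  exact this

lemma integral_exp_neg_mul (hlam : 0 < lam) (hX : HasExpLaw P X lam) {s : ℝ} (hs : 0 ≤ s) :
    ∫ ω, exp (-(s * X ω)) ∂P = (1 + s * lam)⁻¹ := by
  set r := lam⁻¹
  have hr : 0 < r := inv_pos.2 hlam
  have hcont : Continuous fun x : ℝ => exp (-(s * x)) := by fun_prop
  have hpdf (r : ℝ) : Measurable (exponentialPDF r) :=
    (measurable_exponentialPDFReal r).ennreal_ofReal
  -- `exp (-s x)` times the density of rate `r` is `r / (r + s)` times the density of rate `r + s`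
  have hdensity : (exponentialPDF r * fun x => ENNReal.ofReal (exp (-(s * x))))
      = fun x => ENNReal.ofReal (r / (r + s)) * exponentialPDF (r + s) x := by
    ext x
    simp only [Pi.mul_apply, exponentialPDF_eq]
    split_ifs
    · rw [← ENNReal.ofReal_mul (by positivity), ← ENNReal.ofReal_mul (by positivity),
        mul_assoc, ← exp_add]
      congr 1
      field_simp
      ring_nf
    · simp
  have hlintegral : ∫⁻ x, ENNReal.ofReal (exp (-(s * x))) ∂(volume.withDensity (exponentialPDF r))
      = ENNReal.ofReal (r / (r + s)) := by
    rw [lintegral_withDensity_eq_lintegral_mul _ (hpdf r) hcont.measurable.ennreal_ofReal,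
      hdensity, lintegral_const_mul _ (hpdf (r + s)),
      lintegral_exponentialPDF_eq_one (by positivity), mul_one]
  rw [← integral_map hX.1.aemeasurable hcont.aestronglyMeasurable, hX.map_eq_s17,
    integral_eq_lintegral_of_nonneg_ae (ae_of_all _ fun x => (exp_pos _).le)
      hcont.aestronglyMeasurable, hlintegral, ENNReal.toReal_ofReal (by positivity)]
  field_simp
  linear_combination s * inv_mul_cancel₀ hlam.ne'

lemma integral_exp_neg_mul_add_of_indepFun [IsProbabilityMeasure P] (hlam : 0 < lam)
    (hX : HasExpLaw P X lam) {W : Ω → ℝ} (hW : Measurable W) (hind : IndepFun X W P)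
    {s t c : ℝ} (hs : 0 ≤ s) :
    ∫ ω, exp (-(s * X ω + t * W ω + c)) ∂P
      = exp (-c) * ((1 + s * lam)⁻¹ * ∫ ω, exp (-(t * W ω)) ∂P) := by
  have hfactor : ∀ ω, exp (-(s * X ω + t * W ω + c))
      = exp (-c) * (exp (-(s * X ω)) * exp (-(t * W ω))) := by
    intro ω
    rw [← exp_add, ← exp_add]
    ring_nf
  have hindexp : IndepFun (fun ω => exp (-(s * X ω))) (fun ω => exp (-(t * W ω))) P :=
    hind.comp (by fun_prop : Measurable fun x => exp (-(s * x)))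
      (by fun_prop : Measurable fun x => exp (-(t * x)))
  have hXm := hX.1
  simp_rw [hfactor]
  rw [integral_const_mul, hindexp.integral_fun_mul_eq_mul_integral (by fun_prop) (by fun_prop),
    hX.integral_exp_neg_mul hlam hs]

lemma toReal_measure_lt_of_indepFun [IsProbabilityMeasure P] (hlam : 0 < lam)
    (hX : HasExpLaw P X lam) {Y : Ω → ℝ} (hY : Measurable Y) (hY_nonneg : ∀ᵐ ω ∂P, 0 ≤ Y ω)
    (hind : IndepFun Y X P) :
    (P {ω | X ω < Y ω}).toReal = 1 - ∫ ω, exp (-(Y ω / lam)) ∂P := by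
  have hXm := hX.1
  have hS : MeasurableSet {p : ℝ × ℝ | p.2 < p.1} := measurableSet_lt measurable_snd measurable_fst
  have hlintegral : P {ω | X ω < Y ω} = ∫⁻ ω, ENNReal.ofReal (1 - exp (-(Y ω / lam))) ∂P :=
    calc P {ω | X ω < Y ω} = P.map (fun ω => (Y ω, X ω)) {p | p.2 < p.1} := by
          rw [Measure.map_apply (by fun_prop) hS]; rfl
      _ = ∫⁻ y, P.map X (Iio y) ∂P.map Y := by
          rw [(indepFun_iff_map_prod_eq_prod_map_map (by fun_prop) (by fun_prop)).1 hind,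
            Measure.prod_apply hS]
          rfl
      _ = ∫⁻ ω, ENNReal.ofReal (1 - exp (-(Y ω / lam))) ∂P := by
          simp_rw [hX.map_Iio hlam]
          exact lintegral_map (by fun_prop) hY
  have hexp_le_one : ∀ᵐ ω ∂P, exp (-(Y ω / lam)) ≤ 1 := by
    filter_upwards [hY_nonneg] with ω hω
    exact exp_le_one_iff.2 (neg_nonpos.2 (div_nonneg hω hlam.le))
  have hexp_int : Integrable (fun ω => exp (-(Y ω / lam))) P :=
    (integrable_const 1).mono' (by fun_prop)
      (hexp_le_one.mono fun ω h => by rwa [norm_of_nonneg (exp_pos _).le])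
  have hnonneg : 0 ≤ᵐ[P] fun ω => 1 - exp (-(Y ω / lam)) :=
    hexp_le_one.mono fun ω h => sub_nonneg.2 h
  have hint : Integrable (fun ω => 1 - exp (-(Y ω / lam))) P := (integrable_const 1).sub hexp_int
  rw [hlintegral, ← ofReal_integral_eq_lintegral_ofReal hint hnonneg,
    ENNReal.toReal_ofReal (integral_nonneg_of_ae hnonneg),
    integral_sub (integrable_const 1) hexp_int, integral_const, probReal_univ, one_smul]

end HasExpLaw

lemma setOf_outage_eq {Ω : Type*} {A B η u ρ : ℝ} (hA : 0 < A) (hρ : 0 < ρ) (X₁ X₂ Z : Ω → ℝ) :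
    {ω | A * ρ * X₂ ω < u * (B * ρ * X₁ ω + η * ρ * Z ω + 1)}
      = {ω | X₂ ω < u * B / A * X₁ ω + u * η / A * Z ω + u / (A * ρ)} := by
  ext ω
  change A * ρ * X₂ ω < _ ↔ X₂ ω < _
  rw [← mul_lt_mul_iff_right₀ (mul_pos hA hρ), mul_add, mul_add]
  field_simp

lemma toReal_measure_outage_eq {Ω : Type*} [MeasurableSpace Ω] {P : Measure Ω}
    [IsProbabilityMeasure P] {lam₁ lam₂ A B η u ρ : ℝ}
    (hlam₁ : 0 < lam₁) (hlam₂ : 0 < lam₂) (hA : 0 < A) (hB : 0 ≤ B) (hη : 0 ≤ η) (hu : 0 ≤ u)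
    (hρ : 0 < ρ) {X₁ X₂ Z : Ω → ℝ} (hX₁ : HasExpLaw P X₁ lam₁) (hX₂ : HasExpLaw P X₂ lam₂)
    (hZ : Measurable Z) (hZ_nonneg : ∀ ω, 0 ≤ Z ω) (hX₁Z : IndepFun X₁ Z P)
    (hX₁Z_X₂ : IndepFun (fun ω => (X₁ ω, Z ω)) X₂ P) :
    (P {ω | A * ρ * X₂ ω < u * (B * ρ * X₁ ω + η * ρ * Z ω + 1)}).toReal
      = 1 - exp (-(u / (A * ρ) / lam₂)) * (A * lam₂ / (A * lam₂ + B * u * lam₁) *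
          ∫ ω, exp (-(η * u * Z ω) / (A * lam₂)) ∂P) := by
  have hX₁m := hX₁.1
  set Y := fun ω => u * B / A * X₁ ω + u * η / A * Z ω + u / (A * ρ)
  have hY : Measurable Y := by fun_prop
  have hY_nonneg : ∀ᵐ ω ∂P, 0 ≤ Y ω := by
    filter_upwards [hX₁.ae_nonneg hlam₁] with ω hω
    have := hZ_nonneg ω
    positivity
  have hind : IndepFun Y X₂ P :=
    hX₁Z_X₂.comp (φ := fun p : ℝ × ℝ => u * B / A * p.1 + u * η / A * p.2 + u / (A * ρ))
      (by fun_prop) measurable_id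
  have hexp : ∀ ω, exp (-(Y ω / lam₂)) = exp (-(u * B / (A * lam₂) * X₁ ω
      + η * u / (A * lam₂) * Z ω + u / (A * ρ) / lam₂)) := by
    intro ω
    congr 1
    simp only [Y]
    field_simp
  rw [setOf_outage_eq hA hρ, hX₂.toReal_measure_lt_of_indepFun hlam₂ hY hY_nonneg hind,
    integral_congr_ae (ae_of_all _ hexp),
    hX₁.integral_exp_neg_mul_add_of_indepFun hlam₁ hZ hX₁Z (by positivity)]
  congr 3
  · field_simp
  · congr with ω
    ring_nf

theorem stmt_17 {Ω : Type*} [MeasurableSpace Ω] (P : Measure Ω) [IsProbabilityMeasure P]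
    (lam₁ lam₂ A B η u : ℝ)
    (hlam₁ : 0 < lam₁) (hlam₂ : 0 < lam₂) (hA : 0 < A) (hB : 0 < B)
    (hη : 0 < η) (hu : 0 < u)
    (X₁ X₂ Z : Ω → ℝ)
    (hX₁ : HasExpLaw P X₁ lam₁) (hX₂ : HasExpLaw P X₂ lam₂)
    (hZmeas : Measurable Z) (hZnonneg : ∀ ω, 0 ≤ Z ω)
    (hindep : iIndepFun ![X₁, X₂, Z] P) :
    Tendsto
      (fun ρ : ℝ =>
        (P {ω | A * ρ * X₂ ω < u * (B * ρ * X₁ ω + η * ρ * Z ω + 1)}).toReal)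
      atTop
      (nhds (1 - (A * lam₂ / (A * lam₂ + B * u * lam₁)) *
        ∫ ω, Real.exp (-(η * u * Z ω) / (A * lam₂)) ∂P)) ∧
    0 < 1 - (A * lam₂ / (A * lam₂ + B * u * lam₁)) *
        ∫ ω, Real.exp (-(η * u * Z ω) / (A * lam₂)) ∂P := by
  set q := A * lam₂ / (A * lam₂ + B * u * lam₁)
  set I := ∫ ω, exp (-(η * u * Z ω) / (A * lam₂)) ∂P
  have hmeas : ∀ i, Measurable (![X₁, X₂, Z] i) := by
    intro i
    fin_cases i
    exacts [hX₁.1, hX₂.1, hZmeas]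
  have hX₁Z : IndepFun X₁ Z P := by simpa using hindep.indepFun (i := 0) (j := 2) (by decide)
  have hX₁Z_X₂ : IndepFun (fun ω => (X₁ ω, Z ω)) X₂ P := by
    simpa using hindep.indepFun_prodMk hmeas 0 2 1 (by decide) (by decide)
  have hexp : Tendsto (fun ρ : ℝ => exp (-(u / (A * ρ) / lam₂))) atTop (𝓝 1) := by
    have : Tendsto (fun ρ : ℝ => -(u / (A * ρ) / lam₂)) atTop (𝓝 0) := by
      simpa using (((tendsto_const_nhds (x := u)).div_atTop
        (tendsto_id.const_mul_atTop hA)).div_const lam₂).neg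
    simpa using this.rexp
  constructor
  · have := tendsto_const_nhds (x := (1 : ℝ)) |>.sub (hexp.mul_const (q * I))
    rw [one_mul] at this
    refine this.congr' ?_
    filter_upwards [eventually_gt_atTop 0] with ρ hρ
    exact (toReal_measure_outage_eq hlam₁ hlam₂ hA hB.le hη.le hu.le hρ hX₁ hX₂ hZmeas hZnonneg
      hX₁Z hX₁Z_X₂).symm
  · have hq : q < 1 := (div_lt_one (by positivity)).2 (lt_add_of_pos_right _ (by positivity))
    have hI : I ≤ 1 := by
      have hexp_le_one (ω : Ω) : exp (-(η * u * Z ω) / (A * lam₂)) ≤ 1 := by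
        have := hZnonneg ω
        rw [exp_le_one_iff, neg_div, neg_nonpos]
        positivity
      calc I ≤ ∫ _, (1 : ℝ) ∂P := integral_mono_of_nonneg (ae_of_all _ fun _ => (exp_pos _).le)
              (integrable_const 1) (ae_of_all _ hexp_le_one)
        _ = 1 := by simp
    have hI₀ : 0 ≤ I := integral_nonneg fun _ => (exp_pos _).le
    linarith [mul_le_of_le_one_right (by positivity : 0 ≤ q) hI]
end
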